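/- Suppose F = {w : h_j(w) ≤ 0, j=1,…,r} is convex and the Slater condition holds. Let y ∈ F, let J ⊆ {1,…,r} be a nonempty set of indices with h_j(y) = 0 for j ∈ J, and let λ_j > 0 for j ∈ J satisfy Σ_{j∈J} λ_j ∇h_j(y) = 0. If y₀ satisfies h_j(y₀) < 0 for all j and ρ > 0 is such that h_j(w) < 0 for all j whenever ‖w - y₀‖ ≤ ρ, then ∇h_j(y)ᵀ(w - y) ≤ 0 for every w with ‖w - y₀‖ ≤ ρ and every j ∈ J, and consequently ∇h_j(y) = 0 for all j ∈ J. -/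

import Mathlib

/-! Each active `h j` attains its maximum `0` over the convex set `F` at `y`, so its gradient has
nonpositive inner product with every direction `w - y` into `F`, in particular for `w` in the
Slater ball. A positive combination of these nonpositive numbers is `0`, so each of them vanishes;
and a vector orthogonal to `w - y` for all `w` in a ball of positive radius is zero. -/

open Set

section

variable {E : Type*} [NormedAddCommGroup E] [InnerProductSpace ℝ E]

theorem IsMaxOn.inner_gradient_sub_nonpos [CompleteSpace E] {f : E → ℝ} {s : Set E} {y w : E}
    (hmax : IsMaxOn f s y) (hf : DifferentiableAt ℝ f y) (hs : Convex ℝ s) (hy : y ∈ s)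
    (hw : w ∈ s) : inner ℝ (gradient f y) (w - y) ≤ 0 := by
  have hcone : w - y ∈ posTangentConeAt s y :=
    sub_mem_posTangentConeAt_of_segment_subset (hs.segment_subset hy hw)
  have hderiv := hmax.localize.hasFDerivWithinAt_nonpos hf.hasFDerivAt.hasFDerivWithinAt hcone
  rwa [hf.hasGradientAt.hasFDerivAt.fderiv, InnerProductSpace.toDual_apply_apply] at hderiv

theorem inner_eq_zero_of_sum_smul_eq_zero {ι : Type*} {J : Finset ι} {g : ι → E} {c : ι → ℝ}
    {v : E} (hc : ∀ j ∈ J, 0 < c j) (hsum : ∑ j ∈ J, c j • g j = 0)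
    (hnonpos : ∀ j ∈ J, inner ℝ (g j) v ≤ 0) : ∀ j ∈ J, inner ℝ (g j) v = 0 := by
  have hweighted : ∑ j ∈ J, c j * inner ℝ (g j) v = 0 := by
    simp only [← real_inner_smul_left, ← sum_inner, hsum, inner_zero_left]
  have hterm := (Finset.sum_eq_zero_iff_of_nonpos fun j hj =>
    mul_nonpos_of_nonneg_of_nonpos (hc j hj).le (hnonpos j hj)).mp hweighted
  exact fun j hj => (mul_eq_zero.mp (hterm j hj)).resolve_left (hc j hj).ne'

theorem eq_zero_of_inner_sub_eq_zero_on_closedBall {g y y₀ : E} {ρ : ℝ} (hρ : 0 < ρ)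
    (h : ∀ w ∈ Metric.closedBall y₀ ρ, inner ℝ g (w - y) = 0) : g = 0 := by
  by_contra hg
  have hgpos : 0 < ‖g‖ := norm_pos_iff.mpr hg
  set w := y₀ + (ρ / ‖g‖) • g
  have hw : w ∈ Metric.closedBall y₀ ρ := by
    rw [mem_closedBall_iff_norm, add_sub_cancel_left, norm_smul, Real.norm_eq_abs,
      abs_of_pos (div_pos hρ hgpos), div_mul_cancel₀ _ hgpos.ne']
  have hinner : inner ℝ g (w - y₀) = 0 := by
    rw [← sub_sub_sub_cancel_right w y₀ y, inner_sub_right, h w hw,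
      h y₀ (Metric.mem_closedBall_self hρ.le), sub_zero]
  rw [add_sub_cancel_left, real_inner_smul_right, real_inner_self_eq_norm_sq] at hinner
  have : 0 < ρ / ‖g‖ * ‖g‖ ^ 2 := by positivity
  linarith

end

theorem stmt8_general {m r : ℕ}
    (h : Fin r → EuclideanSpace ℝ (Fin m) → ℝ)
    (hsmooth : ∀ j, ContDiff ℝ 1 (h j))
    (F : Set (EuclideanSpace ℝ (Fin m)))
    (hFdef : F = {w | ∀ j, h j w ≤ 0})
    (hFconv : Convex ℝ F)
    (y : EuclideanSpace ℝ (Fin m)) (hy : y ∈ F)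
    (J : Finset (Fin r))
    (hact : ∀ j ∈ J, h j y = 0)
    (lam : Fin r → ℝ) (hlam : ∀ j ∈ J, 0 < lam j)
    (hsum : ∑ j ∈ J, lam j • gradient (h j) y = 0)
    (y₀ : EuclideanSpace ℝ (Fin m))
    (ρ : ℝ) (hρ : 0 < ρ)
    (hball : ∀ w : EuclideanSpace ℝ (Fin m), ‖w - y₀‖ ≤ ρ → ∀ j, h j w < 0) :
    (∀ w : EuclideanSpace ℝ (Fin m), ‖w - y₀‖ ≤ ρ → ∀ j ∈ J,
      (inner ℝ (gradient (h j) y) (w - y) : ℝ) ≤ 0) ∧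
    ∀ j ∈ J, gradient (h j) y = 0 := by
  have hmax : ∀ j ∈ J, IsMaxOn (h j) F y := fun j hj x hx => by
    rw [hFdef] at hx
    simpa [hact j hj] using hx j
  have hball_sub : ∀ w, ‖w - y₀‖ ≤ ρ → w ∈ F := fun w hw => by
    rw [hFdef]
    exact fun j => (hball w hw j).le
  have hnonpos : ∀ w : EuclideanSpace ℝ (Fin m), ‖w - y₀‖ ≤ ρ → ∀ j ∈ J,
      (inner ℝ (gradient (h j) y) (w - y) : ℝ) ≤ 0 := fun w hw j hj =>
    (hmax j hj).inner_gradient_sub_nonpos ((hsmooth j).differentiable one_ne_zero y) hFconv hy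
      (hball_sub w hw)
  refine ⟨hnonpos, fun j hj => eq_zero_of_inner_sub_eq_zero_on_closedBall (y := y) (y₀ := y₀) hρ
    fun w hw => ?_⟩
  rw [mem_closedBall_iff_norm] at hw
  exact inner_eq_zero_of_sum_smul_eq_zero hlam hsum (hnonpos w hw) j hj

theorem stmt8 {m r : ℕ}
    (h : Fin r → EuclideanSpace ℝ (Fin m) → ℝ)
    (hsmooth : ∀ j, ContDiff ℝ 1 (h j))
    (F : Set (EuclideanSpace ℝ (Fin m)))
    (hFdef : F = {w | ∀ j, h j w ≤ 0})
    (hFconv : Convex ℝ F)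
    (y : EuclideanSpace ℝ (Fin m)) (hy : y ∈ F)
    (J : Finset (Fin r)) (hJne : J.Nonempty)
    (hact : ∀ j ∈ J, h j y = 0)
    (lam : Fin r → ℝ) (hlam : ∀ j ∈ J, 0 < lam j)
    (hsum : ∑ j ∈ J, lam j • gradient (h j) y = 0)
    (y₀ : EuclideanSpace ℝ (Fin m)) (hy₀ : ∀ j, h j y₀ < 0)
    (ρ : ℝ) (hρ : 0 < ρ)
    (hball : ∀ w : EuclideanSpace ℝ (Fin m), ‖w - y₀‖ ≤ ρ → ∀ j, h j w < 0) :
    (∀ w : EuclideanSpace ℝ (Fin m), ‖w - y₀‖ ≤ ρ → ∀ j ∈ J,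
      (inner ℝ (gradient (h j) y) (w - y) : ℝ) ≤ 0) ∧
    ∀ j ∈ J, gradient (h j) y = 0 :=
  stmt8_general h hsmooth F hFdef hFconv y hy J hact lam hlam hsum y₀ ρ hρ hball
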